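/- arXiv:2509.00162 — 2 statements merged into one kernel-verified Lean document; each statement's English description precedes it below -/
import Mathlib

section
/- Let χ be the substitution on {a,b} with χ(a) = aab and χ(b) = abb, and let X_χ be its substitution subshift. Let τ be the substitution on {A,B,C,D} with τ(A) = ACB, τ(B) = ACD, τ(C) = BCB, τ(D) = BCD, and let X_τ be its substitution subshift. Then (X_χ, σ²) is topologically conjugate to (X_τ, σ). -/
open Set Topology Classical

noncomputable section

/-- The left shift `σ` on bi-infinite sequences: `(σ x) n = x (n+1)`. -/
def shiftMap {A : Type} (x : ℤ → A) : ℤ → A := fun n => x (n + 1)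

/-- The shift by an integer amount: `shiftZ n x = σ^n x`. -/
def shiftZ {A : Type} (n : ℤ) (x : ℤ → A) : ℤ → A := fun m => x (m + n)

/-- A bi-infinite sequence is Toeplitz if every coordinate is periodically repeated. -/
def IsToeplitz {A : Type} (x : ℤ → A) : Prop :=
  ∀ i : ℤ, ∃ p : ℕ, 0 < p ∧ ∀ k : ℤ, x (i + k * (p : ℤ)) = x i

/-- The closure of the full shift orbit of `x`. -/
def orbitClosure {A : Type} [TopologicalSpace A] (x : ℤ → A) : Set (ℤ → A) :=
  closure {y | ∃ n : ℤ, shiftZ n x = y}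

/-- The finite word `x_i x_{i+1} ⋯ x_{i+n-1}`. -/
def seqWord {A : Type} (x : ℤ → A) (i : ℤ) (n : ℕ) : List A :=
  List.ofFn fun m : Fin n => x (i + (m : ℕ))

/-- Iterates `θ^k` of a substitution, applied to a letter. -/
def substPow {A : Type} (θ : A → List A) : ℕ → A → List A
  | 0, a => [a]
  | k + 1, a => (θ a).flatMap (substPow θ k)

/-- The substitution subshift of `θ`: all sequences whose finite subwords occur in
some `θ^k(a)`. -/
def substShift {A : Type} (θ : A → List A) : Set (ℤ → A) :=
  {x | ∀ i : ℤ, ∀ n : ℕ, ∃ (k : ℕ) (a : A), (seqWord x i n).IsInfix (substPow θ k a)}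

/-- The full orbit of `x` under an (invertible) map `S`, within the set `X`. -/
def orbitIn {α : Type} (S : α → α) (X : Set α) (x : α) : Set α :=
  {y | y ∈ X ∧ ∃ n : ℕ, S^[n] x = y ∨ S^[n] y = x}

/-- Every `S`-orbit within `X` is dense in `X`. -/
def MinimalOn {α : Type} [TopologicalSpace α] (S : α → α) (X : Set α) : Prop :=
  ∀ x ∈ X, X ⊆ closure (orbitIn S X x)

/-- Every `T`-orbit in `X` is the union of exactly `c` distinct `S`-orbits. -/
def OrbitNumberOn {α : Type} (T S : α → α) (X : Set α) (c : ℕ) : Prop :=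
  ∀ x ∈ X, ∃ r : Fin c → α,
    (∀ i, r i ∈ orbitIn T X x) ∧
    (∀ i j, i ≠ j → r j ∉ orbitIn S X (r i)) ∧
    (∀ y ∈ orbitIn T X x, ∃ i, y ∈ orbitIn S X (r i))

/-- `S` restricts to a homeomorphism of the subset `X`. -/
def RestrictsToHomeomorph {α : Type} [TopologicalSpace α] (S : α → α) (X : Set α) : Prop :=
  ∃ e : X ≃ₜ X, ∀ x : X, (e x : α) = S (x : α)

/-- The systems `(X, S)` and `(Y, R)` are topologically conjugate. -/
def TopConj {α β : Type} [TopologicalSpace α] [TopologicalSpace β]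
    (X : Set α) (S : α → α) (Y : Set β) (R : β → β) : Prop :=
  ∃ (hS : Set.MapsTo S X X) (hR : Set.MapsTo R Y Y) (h : X ≃ₜ Y),
    ∀ x : X, h (Set.MapsTo.restrict S X X hS x) = Set.MapsTo.restrict R Y Y hR (h x)

/-- `(Y, R)` is a topological factor of `(X, S)`. -/
def IsFactorOn {α β : Type} [TopologicalSpace α] [TopologicalSpace β]
    (X : Set α) (S : α → α) (Y : Set β) (R : β → β) : Prop :=
  ∃ F : α → β, Set.MapsTo F X Y ∧ ContinuousOn F X ∧ Set.SurjOn F X Y ∧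
    ∀ x ∈ X, F (S x) = R (F x)

/-- `(X, S)` is a Toeplitz flow: it is topologically conjugate to the orbit closure of
some Toeplitz sequence over some finite alphabet, with the shift map. -/
def IsToeplitzFlow {α : Type} [TopologicalSpace α] (X : Set α) (S : α → α) : Prop :=
  ∃ (B : Type) (_ : Fintype B) (z : ℤ → B), IsToeplitz z ∧
    (letI : TopologicalSpace B := ⊥
     TopConj X S (orbitClosure z) shiftMap)

/-- `Per_p(x)`: the set of positions where `x` is periodic with period `p`. -/
def PerSet {A : Type} (x : ℤ → A) (p : ℕ) : Set ℤ :=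
  {k | ∀ n : ℤ, x (k + n * (p : ℤ)) = x k}

/-- `p` is an essential period of `x`. -/
def IsEssentialPeriod {A : Type} (x : ℤ → A) (p : ℕ) : Prop :=
  0 < p ∧ ¬ ∃ q : ℕ, 0 < q ∧ q < p ∧
    ((fun k => k + (q : ℤ)) '' PerSet x p = PerSet x p) ∧
    (∀ k ∈ PerSet x p, x (k + (q : ℤ)) = x k)

/-- A period structure for a Toeplitz sequence `x`. -/
def IsPeriodStructure {A : Type} (x : ℤ → A) (p : ℕ → ℕ) : Prop :=
  StrictMono p ∧ (∀ k, IsEssentialPeriod x (p k)) ∧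
  (∀ k, p k ∣ p (k + 1)) ∧ (⋃ k, PerSet x (p k)) = Set.univ

/-- `x` is a (σ-)periodic sequence. -/
def IsPeriodicSeq {A : Type} (x : ℤ → A) : Prop :=
  ∃ n : ℕ, 0 < n ∧ ∀ m : ℤ, x (m + (n : ℤ)) = x m

/-- `z` is the bi-infinite concatenation of the `ψ`-images of the letters of `y`,
with `ψ(y₀)` beginning at coordinate `0`. -/
def IsConcat {B C : Type} (ψ : B → List C) (y : ℤ → B) (z : ℤ → C) : Prop :=
  ∃ s : ℤ → ℤ, s 0 = 0 ∧
    (∀ n : ℤ, s (n + 1) = s n + ((ψ (y n)).length : ℤ)) ∧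
    (∀ n : ℤ, ∀ j : Fin (ψ (y n)).length, z (s n + (j : ℕ)) = (ψ (y n)).get j)

/-- `p(x,n) = Σ_{i<n} p(Sⁱ x)`. -/
def psum {X : Type} (p : X → ℕ) (S : X → X) (x : X) (n : ℕ) : ℕ :=
  ∑ i ∈ Finset.range n, p (S^[i] x)


/-- The substitution χ(a) = aab, χ(b) = abb on {a, b} = Fin 2 (a = 0, b = 1). -/
def chi : Fin 2 → List (Fin 2) := fun i => if i = 0 then [0, 0, 1] else [0, 1, 1]

/-- The substitution τ on {A,B,C,D} = Fin 4 (A = 0, …, D = 3). -/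
def tau : Fin 4 → List (Fin 4) := fun i =>
  if i = 0 then [0, 2, 1]
  else if i = 1 then [0, 2, 3]
  else if i = 2 then [1, 2, 1]
  else [1, 2, 3]

-- auxiliary defs
def pairCode (u v : Fin 2) : Fin 4 := ⟨2 * u.val + v.val, by omega⟩

def d1 (c : Fin 4) : Fin 2 := ⟨c.val / 2, by omega⟩
def d2 (c : Fin 4) : Fin 2 := ⟨c.val % 2, by omega⟩

def decode (c : Fin 4) : List (Fin 2) := [d1 c, d2 c]

def P : List (Fin 2) → List (Fin 4)
  | u :: v :: l => pairCode u v :: P l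
  | _ => []

@[simp] lemma P_nil : P [] = [] := rfl
@[simp] lemma P_cons2 (u v : Fin 2) (l : List (Fin 2)) :
    P (u :: v :: l) = pairCode u v :: P l := rfl

lemma P_append : ∀ (l₁ l₂ : List (Fin 2)), Even l₁.length →
    P (l₁ ++ l₂) = P l₁ ++ P l₂
  | [], l₂, _ => by simp
  | [u], l₂, h => by simp at h
  | u :: v :: l, l₂, h => by
      simp only [List.cons_append, P_cons2, List.length_cons] at *
      rw [P_append l l₂ (by rcases h with ⟨t, ht⟩; exact ⟨t - 1, by omega⟩)]

lemma decode_P : ∀ (l : List (Fin 2)), Even l.length → (P l).flatMap decode = l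
  | [], _ => by simp
  | [u], h => by simp at h
  | u :: v :: l, h => by
      simp only [List.length_cons] at h
      have hd : decode (pairCode u v) = [u, v] := by revert u v; decide
      simp only [P_cons2, List.flatMap_cons, hd]
      rw [decode_P l (by rcases h with ⟨t, ht⟩; exact ⟨t - 1, by omega⟩)]
      rfl

lemma substPow_add {A : Type} (θ : A → List A) (m k : ℕ) (a : A) :
    substPow θ (m + k) a = (substPow θ m a).flatMap (substPow θ k) := by
  induction m generalizing a with
  | zero => simp [substPow]
  | succ m ih =>
      have h1 : substPow θ (m + 1 + k) a = (θ a).flatMap (substPow θ (m + k)) := by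
        rw [show m + 1 + k = (m + k) + 1 by omega]; rfl
      have h2 : substPow θ (m + 1) a = (θ a).flatMap (substPow θ m) := rfl
      rw [h1, h2, List.flatMap_assoc]
      congr 1
      funext b
      exact ih b

lemma chi_len (k : ℕ) (a : Fin 2) : (substPow chi k a).length = 3 ^ k := by
  induction k generalizing a with
  | zero => simp [substPow]
  | succ k ih =>
      rw [substPow, List.length_flatMap]
      fin_cases a <;> simp [chi, ih] <;> ring

lemma chi_len_odd (k : ℕ) (a : Fin 2) : Odd (substPow chi k a).length := by
  rw [chi_len]; exact Odd.pow ⟨1, by norm_num⟩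

@[simp] lemma pc00 : pairCode 0 0 = (0:Fin 4) := by decide
@[simp] lemma pc01 : pairCode 0 1 = (1:Fin 4) := by decide
@[simp] lemma pc10 : pairCode 1 0 = (2:Fin 4) := by decide
@[simp] lemma pc11 : pairCode 1 1 = (3:Fin 4) := by decide

lemma tauChi : ∀ (k : ℕ) (u v : Fin 2),
    substPow tau k (pairCode u v) = P (substPow chi k u ++ substPow chi k v) := by
  intro k
  induction k with
  | zero => intro u v; rfl
  | succ k ih =>
      have hlen : ∀ a b : Fin 2, Even (substPow chi k a ++ substPow chi k b).length := by
        intro a b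
        rw [List.length_append]
        exact (chi_len_odd k a).add_odd (chi_len_odd k b)
      have key : ∀ (a b c d e f : Fin 2),
          P ((substPow chi k a ++ substPow chi k b) ++
            ((substPow chi k c ++ substPow chi k d) ++ (substPow chi k e ++ substPow chi k f)))
          = substPow tau k (pairCode a b) ++
            (substPow tau k (pairCode c d) ++ substPow tau k (pairCode e f)) := by
        intro a b c d e f
        rw [P_append _ _ (hlen a b), P_append _ _ (hlen c d), ih, ih, ih]
      intro u v
      fin_cases u <;> fin_cases v
      · have e : substPow chi (k+1) (0:Fin 2) ++ substPow chi (k+1) (0:Fin 2)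
            = (substPow chi k 0 ++ substPow chi k 0) ++
              ((substPow chi k 1 ++ substPow chi k 0) ++ (substPow chi k 0 ++ substPow chi k 1)) := by
          show (chi 0).flatMap _ ++ (chi 0).flatMap _ = _
          simp [chi, List.append_assoc]
        show substPow tau (k+1) (0:Fin 4)
            = P (substPow chi (k+1) (0:Fin 2) ++ substPow chi (k+1) (0:Fin 2))
        rw [e, key]
        show (tau 0).flatMap _ = _
        simp [tau]
      · have e : substPow chi (k+1) (0:Fin 2) ++ substPow chi (k+1) (1:Fin 2)
            = (substPow chi k 0 ++ substPow chi k 0) ++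
              ((substPow chi k 1 ++ substPow chi k 0) ++ (substPow chi k 1 ++ substPow chi k 1)) := by
          show (chi 0).flatMap _ ++ (chi 1).flatMap _ = _
          simp [chi, List.append_assoc]
        show substPow tau (k+1) (1:Fin 4)
            = P (substPow chi (k+1) (0:Fin 2) ++ substPow chi (k+1) (1:Fin 2))
        rw [e, key]
        show (tau 1).flatMap _ = _
        simp [tau]
      · have e : substPow chi (k+1) (1:Fin 2) ++ substPow chi (k+1) (0:Fin 2)
            = (substPow chi k 0 ++ substPow chi k 1) ++
              ((substPow chi k 1 ++ substPow chi k 0) ++ (substPow chi k 0 ++ substPow chi k 1)) := by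
          show (chi 1).flatMap _ ++ (chi 0).flatMap _ = _
          simp [chi, List.append_assoc]
        show substPow tau (k+1) (2:Fin 4)
            = P (substPow chi (k+1) (1:Fin 2) ++ substPow chi (k+1) (0:Fin 2))
        rw [e, key]
        show (tau 2).flatMap _ = _
        simp [tau]
      · have e : substPow chi (k+1) (1:Fin 2) ++ substPow chi (k+1) (1:Fin 2)
            = (substPow chi k 0 ++ substPow chi k 1) ++
              ((substPow chi k 1 ++ substPow chi k 0) ++ (substPow chi k 1 ++ substPow chi k 1)) := by
          show (chi 1).flatMap _ ++ (chi 1).flatMap _ = _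
          simp [chi, List.append_assoc]
        show substPow tau (k+1) (3:Fin 4)
            = P (substPow chi (k+1) (1:Fin 2) ++ substPow chi (k+1) (1:Fin 2))
        rw [e, key]
        show (tau 3).flatMap _ = _
        simp [tau]

@[simp] lemma seqWord_zero {A : Type} (x : ℤ → A) (i : ℤ) : seqWord x i 0 = [] := rfl

@[simp] lemma seqWord_length {A : Type} (x : ℤ → A) (i : ℤ) (n : ℕ) :
    (seqWord x i n).length = n := by simp [seqWord]

lemma seqWord_succ {A : Type} (x : ℤ → A) (i : ℤ) (n : ℕ) :
    seqWord x i (n + 1) = x i :: seqWord x (i + 1) n := by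
  unfold seqWord
  rw [List.ofFn_succ]
  congr 1
  · norm_num
  · exact congrArg List.ofFn (funext fun m => by congr 1; push_cast [Fin.val_succ]; ring)

lemma seqWord_append {A : Type} (x : ℤ → A) :
    ∀ (a : ℕ) (i : ℤ) (b : ℕ), seqWord x i (a + b) = seqWord x i a ++ seqWord x (i + a) b := by
  intro a
  induction a with
  | zero => intro i b; simp
  | succ a ih =>
      intro i b
      rw [show a + 1 + b = (a + b) + 1 by ring, seqWord_succ, seqWord_succ, ih (i+1) b]
      simp only [List.cons_append]
      congr 2
      push_cast
      ring

lemma seqWord_infix {A : Type} (x : ℤ → A) {i j : ℤ} {n m : ℕ}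
    (h1 : j ≤ i) (h2 : i + n ≤ j + m) :
    (seqWord x i n).IsInfix (seqWord x j m) := by
  set a := (i - j).toNat with ha
  have haz : (a : ℤ) = i - j := Int.toNat_of_nonneg (by omega)
  have hm : m = a + (n + (m - a - n)) := by omega
  rw [hm, seqWord_append, seqWord_append, show j + (a:ℤ) = i by omega]
  exact ⟨seqWord x j a, seqWord x (i + n) (m - a - n), List.append_assoc _ _ _⟩

def Fmap (x : ℤ → Fin 2) : ℤ → Fin 4 := fun n => pairCode (x (2*n)) (x (2*n+1))

def Gmap (y : ℤ → Fin 4) : ℤ → Fin 2 :=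
  fun n => if n % 2 = 0 then d1 (y (n/2)) else d2 (y (n/2))

lemma Gmap_even (y : ℤ → Fin 4) (m : ℤ) : Gmap y (2*m) = d1 (y m) := by
  simp [Gmap, show (2*m) % 2 = 0 by omega, show (2*m)/2 = m by omega]

lemma Gmap_odd (y : ℤ → Fin 4) (m : ℤ) : Gmap y (2*m+1) = d2 (y m) := by
  simp [Gmap, show (2*m+1) % 2 = 1 by omega, show (2*m+1)/2 = m by omega]

lemma GF (x : ℤ → Fin 2) : Gmap (Fmap x) = x := by
  funext n
  rcases Int.even_or_odd n with ⟨m, hm⟩ | ⟨m, hm⟩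
  · rw [show n = 2*m by omega, Gmap_even]
    show d1 (pairCode (x (2*m)) (x (2*m+1))) = x (2*m)
    generalize x (2*m) = u
    generalize x (2*m+1) = v
    revert u v; decide
  · rw [show n = 2*m+1 by omega, Gmap_odd]
    show d2 (pairCode (x (2*m)) (x (2*m+1))) = x (2*m+1)
    generalize x (2*m) = u
    generalize x (2*m+1) = v
    revert u v; decide

lemma FG (y : ℤ → Fin 4) : Fmap (Gmap y) = y := by
  funext n
  show pairCode (Gmap y (2*n)) (Gmap y (2*n+1)) = y n
  rw [Gmap_even, Gmap_odd]
  generalize y n = c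
  revert c; decide

lemma Fseq (x : ℤ → Fin 2) : ∀ (n : ℕ) (i : ℤ),
    seqWord (Fmap x) i n = P (seqWord x (2*i) (2*n)) := by
  intro n
  induction n with
  | zero => intro i; rfl
  | succ n ih =>
      intro i
      rw [seqWord_succ]
      rw [show 2*(n+1) = (2*n+1)+1 by ring, seqWord_succ,
        show (2*n:ℕ)+1 = (2*n)+1 from rfl, seqWord_succ]
      rw [show (2*i+1)+1 = 2*(i+1) by ring]
      rw [P_cons2, ih (i+1)]
      rfl

lemma Gseq (y : ℤ → Fin 4) : ∀ (m : ℕ) (q : ℤ),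
    seqWord (Gmap y) (2*q) (2*m) = (seqWord y q m).flatMap decode := by
  intro m
  induction m with
  | zero => intro q; rfl
  | succ m ih =>
      intro q
      rw [show 2*(m+1) = (2*m+1)+1 by ring, seqWord_succ,
        show (2*m:ℕ)+1 = (2*m)+1 from rfl, seqWord_succ,
        show (2*q+1)+1 = 2*(q+1) by ring, ih (q+1)]
      rw [seqWord_succ, List.flatMap_cons]
      rw [show (2*q:ℤ)+1 = 2*q+1 from rfl, Gmap_even, Gmap_odd]
      rfl

lemma infix_flatMap {A B : Type} (f : A → List B) {l₁ l₂ : List A} (h : l₁.IsInfix l₂) :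
    (l₁.flatMap f).IsInfix (l₂.flatMap f) := by
  obtain ⟨s, t, hst⟩ := h
  exact ⟨s.flatMap f, t.flatMap f, by rw [← hst]; simp⟩

lemma pair_infix : ∀ u v : Fin 2, ([u, v]).IsInfix (substPow chi 2 0) := by decide

lemma mem_fwd {x : ℤ → Fin 2} (hx : x ∈ substShift chi) : Fmap x ∈ substShift tau := by
  intro i n
  obtain ⟨k, a, s, t, hst⟩ := hx (2*i) (2*n)
  have hw : Even (seqWord x (2*i) (2*n)).length := by rw [seqWord_length]; exact ⟨n, by ring⟩
  have main : ∃ s' t', Even s'.length ∧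
      substPow chi k a ++ substPow chi k a = s' ++ (seqWord x (2*i) (2*n) ++ t') := by
    rcases Nat.even_or_odd s.length with hs | hs
    · exact ⟨s, t ++ substPow chi k a, hs, by rw [← hst]; simp⟩
    · refine ⟨substPow chi k a ++ s, t, ?_, by rw [← hst]; simp⟩
      rw [List.length_append]
      exact (chi_len_odd k a).add_odd hs
  obtain ⟨s', t', hs', hD⟩ := main
  refine ⟨k, pairCode a a, P s', P t', ?_⟩
  rw [Fseq, List.append_assoc, ← P_append _ _ hw, ← P_append _ _ hs', ← hD, tauChi]

lemma mem_bwd {y : ℤ → Fin 4} (hy : y ∈ substShift tau) : Gmap y ∈ substShift chi := by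
  intro i n
  obtain ⟨k, a, hinf⟩ := hy (i/2) (n+1)
  have h1 : (seqWord (Gmap y) i n).IsInfix (seqWord (Gmap y) (2*(i/2)) (2*(n+1))) :=
    seqWord_infix _ (by omega) (by push_cast; omega)
  rw [Gseq] at h1
  have h2 : ((seqWord y (i/2) (n+1)).flatMap decode).IsInfix
      ((substPow tau k a).flatMap decode) := infix_flatMap _ hinf
  have ha : pairCode (d1 a) (d2 a) = a := by
    have h : ∀ c : Fin 4, pairCode (d1 c) (d2 c) = c := by decide
    exact h a
  have heven : Even (substPow chi k (d1 a) ++ substPow chi k (d2 a)).length := by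
    rw [List.length_append]
    exact (chi_len_odd k (d1 a)).add_odd (chi_len_odd k (d2 a))
  have h3 : (substPow tau k a).flatMap decode
      = substPow chi k (d1 a) ++ substPow chi k (d2 a) := by
    conv_lhs => rw [← ha]
    rw [tauChi, decode_P _ heven]
  have h4 : (substPow chi k (d1 a) ++ substPow chi k (d2 a)).IsInfix
      (substPow chi (2+k) 0) := by
    rw [substPow_add]
    have := infix_flatMap (substPow chi k) (pair_infix (d1 a) (d2 a))
    simpa using this
  exact ⟨2+k, 0, (h1.trans (h3 ▸ h2)).trans h4⟩

lemma shift_mem {A : Type} (θ : A → List A) {x : ℤ → A} (hx : x ∈ substShift θ) :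
    shiftMap x ∈ substShift θ := by
  intro i n
  obtain ⟨k, a, h⟩ := hx (i+1) n
  refine ⟨k, a, ?_⟩
  have he : seqWord (shiftMap x) i n = seqWord x (i+1) n :=
    congrArg List.ofFn (funext fun m => by show x _ = x _; congr 1; ring)
  rwa [he]

def Ehomeo : (ℤ → Fin 2) ≃ₜ (ℤ → Fin 4) where
  toFun := Fmap
  invFun := Gmap
  left_inv := GF
  right_inv := FG
  continuous_toFun := by
    show Continuous Fmap
    apply continuous_pi
    intro n
    have hc : Continuous (fun p : Fin 2 × Fin 2 => pairCode p.1 p.2) :=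
      continuous_of_discreteTopology
    have h1 : Continuous (fun x : ℤ → Fin 2 => (x (2*n), x (2*n+1))) :=
      (continuous_apply (2*n)).prodMk (continuous_apply (2*n+1))
    exact hc.comp h1
  continuous_invFun := by
    show Continuous Gmap
    apply continuous_pi
    intro n
    have hc : Continuous (fun c : Fin 4 => if n % 2 = 0 then d1 c else d2 c) :=
      continuous_of_discreteTopology
    have h1 : Continuous (fun y : ℤ → Fin 4 => y (n/2)) := continuous_apply (n/2)
    exact hc.comp h1

/-- (X_χ, σ²) is topologically conjugate to (X_τ, σ). -/
theorem statement13 :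
    TopConj (substShift chi) (shiftMap^[2]) (substShift tau) shiftMap := by
  have hS : Set.MapsTo (shiftMap^[2]) (substShift chi) (substShift chi) := by
    intro x hx
    show shiftMap (shiftMap x) ∈ _
    exact shift_mem chi (shift_mem chi hx)
  have hR : Set.MapsTo shiftMap (substShift tau) (substShift tau) :=
    fun y hy => shift_mem tau hy
  have himg : Fmap '' substShift chi = substShift tau := by
    ext y
    constructor
    · rintro ⟨x, hx, rfl⟩
      exact mem_fwd hx
    · intro hy
      exact ⟨Gmap y, mem_bwd hy, FG y⟩
  refine ⟨hS, hR, (Ehomeo.image (substShift chi)).trans (Homeomorph.setCongr himg), ?_⟩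
  intro x
  apply Subtype.ext
  show Fmap ((shiftMap^[2]) x.val) = shiftMap (Fmap x.val)
  funext n
  show pairCode (x.val (2*n+1+1)) (x.val (2*n+1+1+1))
      = pairCode (x.val (2*(n+1))) (x.val (2*(n+1)+1))
  congr 1 <;> · congr 1; ring


end
end

section
/- Let χ be the substitution on {a,b} with χ(a) = aab and χ(b) = abb, and let X_χ be its substitution subshift. Then there exists a continuous surjection F : X_χ → X_χ satisfying F ∘ σ² = σ ∘ F; that is, (X_χ, σ) is a topological factor of (X_χ, σ²). -/
/-!
Write `a = 0` and `b = 1`, so that `χ v = 0 v 1`. The letter of `χ^k v` at `r` is `0` or `1`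
according as the lowest nonzero ternary digit of `2 r + 1` is `1` or `2`, except at the centre
`2 r + 1 = 3 ^ k`, where it is `v`. Hence a sequence lies in `X_χ` iff at every level `k` it has a
phase `c`: `x m` is that letter of `2 m + c` whenever `3 ^ k ∤ 2 m + c`. A window of length
`3 ^ k` determines the phase modulo `3 ^ k`, so the phases of the various levels are compatible.
Doubling exchanges the lowest nonzero digits `1` and `2`, so `F x m = x (2 m) + 1` carries a
sequence of phase `2 d` to one of phase `d`. Thus `F` maps `X_χ` into itself, and it is onto
because a preimage can be built from the phases `2 c`, filling by hand the positions that are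
holes at every level. Finally `F ∘ σ² = σ ∘ F` is immediate.
-/

open Set Topology Classical

noncomputable section

/-- `0` or `1` according as the lowest nonzero ternary digit of `n` is `1` or `2`
(`lowTrit 0 = 0` is a junk value). -/
def lowTrit (n : ℤ) : Fin 2 :=
  if n ≠ 0 ∧ n % 3 = 0 then lowTrit (n / 3) else if n % 3 = 2 then 1 else 0
termination_by n.natAbs
decreasing_by omega

lemma lowTrit_of_emod_eq_one {n : ℤ} (h : n % 3 = 1) : lowTrit n = 0 := by
  rw [lowTrit]; simp [h]

lemma lowTrit_of_emod_eq_two {n : ℤ} (h : n % 3 = 2) : lowTrit n = 1 := by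
  rw [lowTrit]; simp [h]

lemma lowTrit_three_mul {n : ℤ} (hn : n ≠ 0) : lowTrit (3 * n) = lowTrit n := by
  rw [lowTrit, if_pos ⟨by omega, by omega⟩, Int.mul_ediv_cancel_left _ three_ne_zero]

lemma lowTrit_three_pow_mul (j : ℕ) {n : ℤ} (hn : n ≠ 0) :
    lowTrit (3 ^ j * n) = lowTrit n := by
  induction j with
  | zero => rw [pow_zero, one_mul]
  | succ j ih => rw [pow_succ', mul_assoc, lowTrit_three_mul (by positivity), ih]

lemma lowTrit_two_mul {n : ℤ} (hn : n ≠ 0) : lowTrit (2 * n) = lowTrit n + 1 := by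
  induction h : n.natAbs using Nat.strong_induction_on generalizing n with | _ N ih =>
  rcases (by omega : n % 3 = 0 ∨ n % 3 = 1 ∨ n % 3 = 2) with h0 | h1 | h2
  · obtain ⟨m, rfl⟩ : 3 ∣ n := Int.dvd_of_emod_eq_zero h0
    have hm : m ≠ 0 := by rintro rfl; simp at hn
    rw [mul_left_comm, lowTrit_three_mul (by omega), lowTrit_three_mul hm,
      ih m.natAbs (by omega) hm rfl]
  · rw [lowTrit_of_emod_eq_one h1, lowTrit_of_emod_eq_two (by omega)]; rfl
  · rw [lowTrit_of_emod_eq_two h2, lowTrit_of_emod_eq_one (by omega)]; rfl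

lemma lowTrit_congr {k : ℕ} {a b : ℤ} (h : a ≡ b [ZMOD 3 ^ k]) (ha : ¬ (3 : ℤ) ^ k ∣ a) :
    lowTrit a = lowTrit b := by
  induction k generalizing a b with
  | zero => simp at ha
  | succ k ih =>
    have h3 : a % 3 = b % 3 := h.of_dvd (dvd_pow_self 3 k.succ_ne_zero)
    rcases (by omega : a % 3 = 0 ∨ a % 3 = 1 ∨ a % 3 = 2) with h0 | h1 | h2
    · obtain ⟨a', rfl⟩ : 3 ∣ a := Int.dvd_of_emod_eq_zero h0
      obtain ⟨b', rfl⟩ : 3 ∣ b := Int.dvd_of_emod_eq_zero (by omega)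
      rw [pow_succ'] at h ha
      have h' : a' ≡ b' [ZMOD 3 ^ k] :=
        Int.modEq_iff_dvd.2 (Int.dvd_of_mul_dvd_mul_left three_ne_zero
          (by rw [mul_sub]; exact h.dvd))
      have ha' : ¬ (3 : ℤ) ^ k ∣ a' := fun hd => ha (mul_dvd_mul_left 3 hd)
      have hb' : b' ≠ 0 := by rintro rfl; exact ha' (h'.dvd_iff.2 (dvd_zero _))
      rw [lowTrit_three_mul (by rintro rfl; simp at ha'), lowTrit_three_mul hb', ih h' ha']
    · rw [lowTrit_of_emod_eq_one h1, lowTrit_of_emod_eq_one (by omega)]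
    · rw [lowTrit_of_emod_eq_two h2, lowTrit_of_emod_eq_two (by omega)]

lemma exists_two_mul_modEq (t : ℤ) (k : ℕ) : ∃ d, 2 * d ≡ t [ZMOD 3 ^ k] := by
  obtain ⟨h, hh⟩ : Odd ((3 : ℤ) ^ k) := Odd.pow (by decide)
  exact ⟨(h + 1) * t, Int.modEq_iff_dvd.2 ⟨-t, by rw [hh]; ring⟩⟩

lemma exists_mem_Ico_two_mul_add_modEq (i c t : ℤ) (k : ℕ) :
    ∃ m ∈ Ico i (i + 3 ^ k), 2 * m + c ≡ t [ZMOD 3 ^ k] := by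
  obtain ⟨d, hd⟩ := exists_two_mul_modEq (t - c) k
  have hpos : (0 : ℤ) < 3 ^ k := by positivity
  refine ⟨i + (d - i) % 3 ^ k, ⟨by simp [Int.emod_nonneg _ hpos.ne'], by
    simpa using Int.emod_lt_of_pos (d - i) hpos⟩, ?_⟩
  have hm : i + (d - i) % 3 ^ k ≡ d [ZMOD 3 ^ k] :=
    Int.modEq_iff_dvd.2 ⟨(d - i) / 3 ^ k, by rw [Int.emod_def]; ring⟩
  simpa using (hm.mul_left 2).trans hd |>.add_right c

def PhaseOn (x : ℤ → Fin 2) (k : ℕ) (c : ℤ) (s : Set ℤ) : Prop :=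
  ∀ m ∈ s, ¬ (3 : ℤ) ^ k ∣ 2 * m + c → x m = lowTrit (2 * m + c)

namespace PhaseOn

variable {x : ℤ → Fin 2} {k : ℕ} {c c' : ℤ} {s : Set ℤ}

lemma mono {t : Set ℤ} (h : PhaseOn x k c s) (hts : t ⊆ s) : PhaseOn x k c t :=
  fun m hm => h m (hts hm)

lemma of_le {j : ℕ} (h : PhaseOn x k c s) (hjk : j ≤ k) : PhaseOn x j c s :=
  fun m hm hj => h m hm fun hk => hj ((pow_dvd_pow 3 hjk).trans hk)

lemma congr (h : PhaseOn x k c s) (hc : c ≡ c' [ZMOD 3 ^ k]) : PhaseOn x k c' s := by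
  intro m hm hm'
  have e : 2 * m + c' ≡ 2 * m + c [ZMOD 3 ^ k] := (hc.add_left _).symm
  rw [h m hm fun hd => hm' (e.dvd_iff.2 hd), lowTrit_congr e.symm fun hd => hm' (e.dvd_iff.2 hd)]

/-- Recognizability of the phase. -/
theorem modEq {i : ℤ} (h : PhaseOn x k c (Ico i (i + 3 ^ k)))
    (h' : PhaseOn x k c' (Ico i (i + 3 ^ k))) : c ≡ c' [ZMOD 3 ^ k] := by
  suffices ∀ j ≤ k, (3 : ℤ) ^ j ∣ c' - c from Int.modEq_iff_dvd.2 (this k le_rfl)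
  intro j hj
  induction j with
  | zero => simp
  | succ j ih =>
    obtain ⟨e, he⟩ := ih (by omega)
    by_contra hdvd
    have he3 : ¬ (3 : ℤ) ∣ e := fun ⟨f, hf⟩ => hdvd ⟨f, by rw [he, hf]; ring⟩
    -- at a position where `2 * m + c ≡ 3 ^ j * e`, the two patterns disagree
    obtain ⟨m, hm, hmc⟩ := exists_mem_Ico_two_mul_add_modEq i c (3 ^ j * e) (j + 1)
    have hmc' : 2 * m + c' ≡ 3 ^ j * (2 * e) [ZMOD 3 ^ (j + 1)] := by
      rw [show c' = c + 3 ^ j * e by linarith, ← add_assoc,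
        show (3 : ℤ) ^ j * (2 * e) = 3 ^ j * e + 3 ^ j * e by ring]
      exact hmc.add_right _
    have hm' : m ∈ Ico i (i + 3 ^ k) :=
      Ico_subset_Ico_right (by gcongr; norm_num) hm
    have hole {a f : ℤ} (ha : a ≡ 3 ^ j * f [ZMOD 3 ^ (j + 1)]) (hf : ¬ (3 : ℤ) ∣ f) :
        ¬ (3 : ℤ) ^ (j + 1) ∣ a := fun hd => hf <|
      Int.dvd_of_mul_dvd_mul_left (a := 3 ^ j) (by positivity)
        (by rw [← pow_succ]; exact ha.dvd_iff.1 hd)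
    have he2 : ¬ (3 : ℤ) ∣ 2 * e := by omega
    have hx := h m hm' fun hd => hole hmc he3 ((pow_dvd_pow 3 hj).trans hd)
    have hx' := h' m hm' fun hd => hole hmc' he2 ((pow_dvd_pow 3 hj).trans hd)
    rw [lowTrit_congr hmc (hole hmc he3), lowTrit_three_pow_mul j (by omega)] at hx
    rw [lowTrit_congr hmc' (hole hmc' he2), lowTrit_three_pow_mul j (by omega),
      lowTrit_two_mul (by omega), ← hx] at hx'
    exact (by decide : ∀ a : Fin 2, a ≠ a + 1) _ hx'

end PhaseOn

lemma chi_eq (v : Fin 2) : chi v = [0, v, 1] := by fin_cases v <;> rfl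

lemma substPow_chi_succ (k : ℕ) (v : Fin 2) :
    substPow chi (k + 1) v = substPow chi k 0 ++ substPow chi k v ++ substPow chi k 1 := by
  simp [substPow, chi_eq]

@[simp]
lemma length_substPow_chi (k : ℕ) (v : Fin 2) : (substPow chi k v).length = 3 ^ k := by
  induction k generalizing v with
  | zero => rfl
  | succ k ih => simp [substPow_chi_succ, ih]; ring

lemma not_three_pow_dvd_two_mul_add_one {k r : ℕ} (hr : r < 3 ^ k) (hne : 2 * r + 1 ≠ 3 ^ k) :
    ¬ (3 : ℤ) ^ k ∣ 2 * r + 1 := by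
  exact_mod_cast fun hd => hne (Nat.eq_of_dvd_of_lt_two_mul (by omega) hd (by omega))

theorem getElem_substPow_chi (k : ℕ) (v : Fin 2) (r : ℕ) (hr : r < (substPow chi k v).length) :
    (substPow chi k v)[r] = if 2 * r + 1 = 3 ^ k then v else lowTrit (2 * r + 1) := by
  induction k generalizing v r with
  | zero =>
    obtain rfl : r = 0 := by simpa [substPow] using hr
    simp [substPow]
  | succ k ih =>
    have hr' : r < 3 * 3 ^ k := by simpa [pow_succ'] using hr
    rw [List.getElem_of_eq (substPow_chi_succ k v)]
    rcases lt_or_ge r (3 ^ k) with h1 | h1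
    · rw [if_neg (show 2 * r + 1 ≠ 3 ^ (k + 1) by rw [pow_succ]; omega),
        List.getElem_append_left (by simp only [List.length_append, length_substPow_chi]; omega),
        List.getElem_append_left (by simp only [length_substPow_chi]; omega), ih]
      split_ifs with hc
      · have h3 : (2 * r + 1 : ℤ) = 3 ^ k * 1 := by exact_mod_cast hc.trans (mul_one _).symm
        rw [h3, lowTrit_three_pow_mul k one_ne_zero, lowTrit_of_emod_eq_one rfl]
      · rfl
    rcases lt_or_ge r (2 * 3 ^ k) with h2 | h2
    · rw [List.getElem_append_left (by simp only [List.length_append, length_substPow_chi]; omega),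
        List.getElem_append_right (by simp only [length_substPow_chi]; omega), ih]
      simp only [length_substPow_chi]
      by_cases hc : 2 * (r - 3 ^ k) + 1 = 3 ^ k
      · rw [if_pos hc, if_pos (show 2 * r + 1 = 3 ^ (k + 1) by rw [pow_succ]; omega)]
      · rw [if_neg hc, if_neg (show 2 * r + 1 ≠ 3 ^ (k + 1) by rw [pow_succ]; omega)]
        exact lowTrit_congr (Int.modEq_iff_dvd.2 ⟨2, by push_cast [Nat.cast_sub h1]; ring⟩)
          (not_three_pow_dvd_two_mul_add_one (by omega) hc)
    · rw [if_neg (show 2 * r + 1 ≠ 3 ^ (k + 1) by rw [pow_succ]; omega),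
        List.getElem_append_right
          (by simp only [List.length_append, length_substPow_chi]; omega), ih]
      simp only [List.length_append, length_substPow_chi]
      split_ifs with hc
      · have h5 : (2 * r + 1 : ℤ) = 3 ^ k * 5 := by
          have : 2 * r + 1 = 3 ^ k * 5 := by omega
          exact_mod_cast this
        rw [h5, lowTrit_three_pow_mul k (by norm_num), lowTrit_of_emod_eq_two (by norm_num)]
      · have h3 : 3 ^ k + 3 ^ k ≤ r := by omega
        exact lowTrit_congr (Int.modEq_iff_dvd.2 ⟨4, by push_cast [Nat.cast_sub h3]; ring⟩)
          (not_three_pow_dvd_two_mul_add_one (by omega) hc)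

lemma substPow_chi_append_isInfix (k : ℕ) (u v : Fin 2) :
    substPow chi k u ++ substPow chi k v <:+: substPow chi (k + 2) 0 := by
  rw [substPow_chi_succ (k + 1), substPow_chi_succ k 0, substPow_chi_succ k 1]
  set A := substPow chi k 0
  set B := substPow chi k 1
  fin_cases u <;> fin_cases v
  · exact ⟨[], B ++ A ++ A ++ B ++ A ++ B ++ B, by simp [A, B]⟩
  · exact ⟨A, A ++ A ++ B ++ A ++ B ++ B, by simp [A, B]⟩
  · exact ⟨A ++ A, A ++ B ++ A ++ B ++ B, by simp [A, B]⟩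
  · exact ⟨A ++ A ++ B ++ A ++ A ++ B ++ A, [], by simp [A, B]⟩

section SeqWord

variable {A : Type} (x : ℤ → A)

@[simp]
lemma length_seqWord (i : ℤ) (n : ℕ) : (seqWord x i n).length = n := by simp [seqWord]

@[simp]
lemma getElem_seqWord (i : ℤ) (n j : ℕ) (hj : j < (seqWord x i n).length) :
    (seqWord x i n)[j] = x (i + j) := by simp [seqWord]

lemma seqWord_add (i : ℤ) (m n : ℕ) :
    seqWord x i (m + n) = seqWord x i m ++ seqWord x (i + m) n := by
  simp [seqWord, List.ofFn_add, add_assoc]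

variable {x}

lemma seqWord_isInfix_seqWord {i p : ℤ} {n L : ℕ} (hpi : p ≤ i) (hiL : i + n ≤ p + L) :
    seqWord x i n <:+: seqWord x p L := by
  obtain ⟨a, rfl⟩ : ∃ a : ℕ, i = p + a := ⟨(i - p).toNat, by omega⟩
  obtain ⟨b, rfl⟩ : ∃ b : ℕ, L = a + n + b := ⟨L - a - n, by omega⟩
  rw [seqWord_add, seqWord_add]
  exact ⟨_, _, rfl⟩

end SeqWord

theorem phaseOn_of_isInfix {x : ℤ → Fin 2} {i : ℤ} {n k K : ℕ} {a : Fin 2}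
    (h : seqWord x i n <:+: substPow chi K a) (hn : 3 ^ k ≤ n) :
    ∃ c, PhaseOn x k c (Ico i (i + n)) := by
  obtain ⟨e, hle, hget⟩ := List.infix_iff_getElem?.1 h
  simp only [length_seqWord, length_substPow_chi] at hle
  have hkK : (3 : ℤ) ^ k ∣ 3 ^ K :=
    pow_dvd_pow 3 <| (Nat.pow_le_pow_iff_right (by norm_num)).1 (show 3 ^ k ≤ 3 ^ K by omega)
  refine ⟨2 * (e - i) + 1, fun m hm hnd => ?_⟩
  simp only [mem_Ico] at hm
  obtain ⟨j, rfl⟩ : ∃ j : ℕ, m = i + j := ⟨(m - i).toNat, by omega⟩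
  have hj : j < n := by omega
  have hx := hget j (by simpa using hj)
  rw [getElem_seqWord, List.getElem?_eq_getElem (by rw [length_substPow_chi]; omega),
    Option.some_inj, getElem_substPow_chi, if_neg ?_] at hx
  · rw [← hx]
    congr 1
    push_cast
    ring
  · intro hc
    apply hnd
    have hc' : ((2 * (j + e) + 1 : ℕ) : ℤ) = 3 ^ K := by exact_mod_cast hc
    push_cast at hc'
    rw [show 2 * (i + j) + (2 * (e - i) + 1) = 2 * ((j : ℤ) + e) + 1 by ring, hc']
    exact hkK

theorem exists_phaseOn_univ {x : ℤ → Fin 2} (hx : x ∈ substShift chi) (k : ℕ) :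
    ∃ c, PhaseOn x k c univ := by
  obtain ⟨K, a, h0⟩ := hx 0 (3 ^ k)
  obtain ⟨c, hc⟩ := phaseOn_of_isInfix h0 le_rfl
  push_cast at hc
  refine ⟨c, fun m _ hm => ?_⟩
  -- any larger window around `m` has a phase, which agrees with `c` on `[0, 3 ^ k)`
  obtain ⟨N, hN⟩ : ∃ N : ℕ, N = m.natAbs + 3 ^ k := ⟨_, rfl⟩
  have hpos : 0 < 3 ^ k := by positivity
  obtain ⟨K', a', hwin⟩ := hx (-N) (2 * N)
  obtain ⟨c', hc'⟩ := phaseOn_of_isInfix (k := k) hwin (by omega)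
  have hcast : ((3 ^ k : ℕ) : ℤ) = 3 ^ k := by norm_cast
  have hsub : Ico (0 : ℤ) (0 + 3 ^ k) ⊆ Ico (-N : ℤ) (-N + (2 * N : ℕ)) :=
    Ico_subset_Ico (by omega) (by omega)
  have hcc : c' ≡ c [ZMOD 3 ^ k] := (hc'.mono hsub).modEq hc
  exact hc'.congr hcc m ⟨by omega, by omega⟩ hm

lemma seqWord_eq_substPow_chi {x : ℤ → Fin 2} {K : ℕ} {c p : ℤ} (hc : PhaseOn x K c univ)
    (hp : 2 * p + c ≡ 1 [ZMOD 3 ^ K]) :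
    seqWord x p (3 ^ K) = substPow chi K (x (p + (3 ^ K / 2 : ℕ))) := by
  refine List.ext_getElem (by simp) fun r h1 _ => ?_
  simp only [length_seqWord] at h1
  rw [getElem_seqWord, getElem_substPow_chi]
  split_ifs with hr
  · rw [show r = 3 ^ K / 2 by omega]
  · have e : 2 * (p + r) + c ≡ 2 * r + 1 [ZMOD 3 ^ K] := by
      convert hp.add_right (2 * (r : ℤ)) using 1 <;> ring
    have hnd : ¬ (3 : ℤ) ^ K ∣ 2 * (p + r) + c := fun hd =>
      not_three_pow_dvd_two_mul_add_one h1 hr (e.dvd_iff.1 hd)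
    rw [hc _ (mem_univ _) hnd, lowTrit_congr e hnd]

theorem mem_substShift_chi_of_phaseOn {x : ℤ → Fin 2} (h : ∀ k, ∃ c, PhaseOn x k c univ) :
    x ∈ substShift chi := by
  intro i n
  obtain ⟨c, hc⟩ := h n
  obtain ⟨p, hp, hpc⟩ := exists_mem_Ico_two_mul_add_modEq (i + 1 - 3 ^ n) c 1 n
  have hpc' : 2 * (p + (3 ^ n : ℕ)) + c ≡ 1 [ZMOD 3 ^ n] := by
    have := hpc.add (Int.modEq_zero_iff_dvd.2 (dvd_mul_right ((3 : ℤ) ^ n) 2))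
    rw [add_zero] at this
    convert this using 1
    push_cast
    ring
  have hn : (n : ℤ) < 3 ^ n := by exact_mod_cast Nat.lt_pow_self (by norm_num)
  simp only [mem_Ico] at hp
  refine ⟨n + 2, 0, (seqWord_isInfix_seqWord (p := p) (L := 3 ^ n + 3 ^ n) (by omega)
    (by push_cast; omega)).trans ?_⟩
  rw [seqWord_add, seqWord_eq_substPow_chi hc hpc, seqWord_eq_substPow_chi hc hpc']
  exact substPow_chi_append_isInfix n _ _

theorem mem_substShift_chi_iff {x : ℤ → Fin 2} :
    x ∈ substShift chi ↔ ∀ k, ∃ c, PhaseOn x k c univ :=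
  ⟨exists_phaseOn_univ, mem_substShift_chi_of_phaseOn⟩

theorem exists_phaseOn_of_compatible (c : ℕ → ℤ)
    (hc : ∀ {j k}, j ≤ k → c k ≡ c j [ZMOD 3 ^ j])
    (g : ℤ → Fin 2) :
    ∃ x : ℤ → Fin 2, (∀ k, PhaseOn x k (c k) univ) ∧
      ∀ n, (∀ k, (3 : ℤ) ^ k ∣ 2 * n + c k) → x n = g n := by
  refine ⟨fun n => if h : ∃ k, ¬ (3 : ℤ) ^ k ∣ 2 * n + c k then
    lowTrit (2 * n + c h.choose) else g n, fun k n _ hn => ?_, fun n hn => ?_⟩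
  · have h : ∃ k, ¬ (3 : ℤ) ^ k ∣ 2 * n + c k := ⟨k, hn⟩
    simp only [dif_pos h]
    rcases le_total h.choose k with hle | hle
    · exact lowTrit_congr ((hc hle).symm.add_left _) h.choose_spec
    · exact (lowTrit_congr ((hc hle).symm.add_left _) hn).symm
  · simp only [dif_neg (not_exists_not.2 hn)]

def evenFlip (x : ℤ → Fin 2) : ℤ → Fin 2 := fun m => x (2 * m) + 1

lemma PhaseOn.evenFlip {x : ℤ → Fin 2} {k : ℕ} {d : ℤ} (h : PhaseOn x k (2 * d) univ) :
    PhaseOn (evenFlip x) k d univ := by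
  intro m _ hm
  have hcop : IsCoprime ((3 : ℤ) ^ k) 2 := (Int.isCoprime_iff_gcd_eq_one.2 rfl).pow_left
  have hm2 : ¬ (3 : ℤ) ^ k ∣ 2 * (2 * m) + 2 * d := fun hd =>
    hm (hcop.dvd_of_dvd_mul_left (by rwa [mul_add]))
  rw [_root_.evenFlip, h _ (mem_univ _) hm2, ← mul_add,
    lowTrit_two_mul fun h0 => hm (by rw [h0]; exact dvd_zero _), add_assoc,
    show (1 + 1 : Fin 2) = 0 from rfl, add_zero]

lemma evenFlip_mem {x : ℤ → Fin 2} (hx : x ∈ substShift chi) :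
    evenFlip x ∈ substShift chi :=
  mem_substShift_chi_iff.2 fun k => by
    obtain ⟨c, hc⟩ := mem_substShift_chi_iff.1 hx k
    obtain ⟨d, hd⟩ := exists_two_mul_modEq c k
    exact ⟨d, (hc.congr hd.symm).evenFlip⟩

theorem exists_evenFlip_eq {z : ℤ → Fin 2} (hz : z ∈ substShift chi) :
    ∃ x ∈ substShift chi, evenFlip x = z := by
  choose c hc using mem_substShift_chi_iff.1 hz
  have hcompat {j k : ℕ} (hjk : j ≤ k) : c k ≡ c j [ZMOD 3 ^ j] :=
    (((hc k).of_le hjk).mono (subset_univ (Ico 0 (0 + 3 ^ j)))).modEq ((hc j).mono (subset_univ _))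
  obtain ⟨x, hx, hholes⟩ := exists_phaseOn_of_compatible (fun k => 2 * c k)
    (fun hjk => (hcompat hjk).mul_left 2) fun n => z (n / 2) + 1
  refine ⟨x, mem_substShift_chi_iff.2 fun k => ⟨_, hx k⟩, funext fun m => ?_⟩
  by_cases h : ∃ k, ¬ (3 : ℤ) ^ k ∣ 2 * m + c k
  · obtain ⟨k, hk⟩ := h
    rw [(hx k).evenFlip m (mem_univ _) hk, hc k m (mem_univ _) hk]
  · have hm : ∀ k, (3 : ℤ) ^ k ∣ 2 * (2 * m) + 2 * c k := fun k => by
      rw [← mul_add]; exact (not_exists_not.1 h k).mul_left 2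
    rw [evenFlip, hholes _ hm, Int.mul_ediv_cancel_left m two_ne_zero, add_assoc,
      show (1 + 1 : Fin 2) = 0 from rfl, add_zero]

lemma continuous_evenFlip : Continuous evenFlip :=
  continuous_pi fun m =>
    (continuous_of_discreteTopology (f := fun a : Fin 2 => a + 1)).comp (continuous_apply (2 * m))

lemma evenFlip_shiftMap_shiftMap (x : ℤ → Fin 2) :
    evenFlip (shiftMap (shiftMap x)) = shiftMap (evenFlip x) := by
  funext m
  simp only [evenFlip, shiftMap]
  ring_nf

/-- (X_χ, σ^1) is a topological factor of (X_χ, σ^2). -/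
theorem statement14 :
    IsFactorOn (substShift chi) (shiftMap^[2]) (substShift chi) (shiftMap^[1]) :=
  ⟨evenFlip, fun _ hx => evenFlip_mem hx, continuous_evenFlip.continuousOn,
    fun _ hz => exists_evenFlip_eq hz, fun x _ => evenFlip_shiftMap_shiftMap x⟩

end
end
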